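/- Let d_1 ≤ d_2 ≤ ⋯ ≤ d_n be nonnegative job sizes with D = Σ_{ℓ=1}^n d_ℓ > 0, let 1 ≤ k ≤ n−1, and suppose ε = ε_k = (Σ_{ℓ=1}^k d_ℓ)/D > 0. Then the efficacy ratio of the k-th Pareto schedule A^k is at most 1/(4ε) + 1 + ε/4, i.e., c(A^k) ≤ (1/(4ε) + 1 + ε/4)·c(A*). -/

import Mathlib

open Finset

lemma sum_sq_identity (f : ℕ → ℝ) (K : ℕ) :
    (∑ i ∈ range K, f i)^2 =
      ∑ i ∈ range K, (f i)^2 + 2 * ∑ i ∈ range K, f i * (∑ j ∈ range i, f j) := by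
  induction K with
  | zero => simp
  | succ K ih =>
    rw [sum_range_succ, sum_range_succ (fun i => (f i)^2), sum_range_succ
      (fun i => f i * (∑ j ∈ range i, f j))]
    nlinarith [ih]

lemma sum_prefix_swap (f : ℕ → ℝ) (K : ℕ) :
    ∑ i ∈ range K, ((K:ℝ) - (i:ℝ)) * f i = ∑ i ∈ range K, ∑ j ∈ range (i+1), f j := by
  induction K with
  | zero => simp
  | succ K ih =>
    rw [sum_range_succ (fun i => ∑ j ∈ range (i+1), f j), ← ih, sum_range_succ]
    rw [show ∑ i ∈ range K, (((K+1:ℕ):ℝ) - (i:ℝ)) * f i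
        = ∑ i ∈ range K, (((K:ℝ) - (i:ℝ)) * f i + f i) from
      Finset.sum_congr rfl (fun i _ => by push_cast; ring)]
    rw [Finset.sum_add_distrib, sum_range_succ]
    push_cast
    ring

lemma gauss_real (m : ℕ) (hm : 1 ≤ m) :
    ∑ j ∈ range m, (j:ℝ) = (m:ℝ) * ((m:ℝ) - 1) / 2 := by
  have h := congrArg (Nat.cast : ℕ → ℝ) (Finset.sum_range_id_mul_two m)
  push_cast [Nat.cast_sub hm] at h
  linarith


lemma pareto_aux (S T a m : ℝ) (ha : 0 ≤ a) (hb : a ≤ S) (hu : m * a ≤ T) (hm : 1 ≤ m) :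
    (2*a*(m+1)*S + (S^2 - a*S) + a*(m+1)*T) * (4*S*(S+T)) ≤
      ((S+T)^2 + 4*S*(S+T) + S^2) * (2*a*(m+1)*S + (S^2 - a*S) + 2*a*T + a^2*(m*(m-1))) := by
  obtain ⟨x, rfl⟩ : ∃ x, a = x^2 := ⟨Real.sqrt a, (Real.sq_sqrt ha).symm⟩
  obtain ⟨y, rfl⟩ : ∃ y, S = x^2 + y^2 :=
    ⟨Real.sqrt (S - x^2), by rw [Real.sq_sqrt (by linarith : (0:ℝ) ≤ S - x^2)]; ring⟩
  obtain ⟨t, rfl⟩ : ∃ t, m = t^2 + 1 :=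
    ⟨Real.sqrt (m - 1), by rw [Real.sq_sqrt (by linarith : (0:ℝ) ≤ m - 1)]; ring⟩
  obtain ⟨z, rfl⟩ : ∃ z, T = (t^2+1) * x^2 + z^2 :=
    ⟨Real.sqrt (T - (t^2+1)*x^2), by
      rw [Real.sq_sqrt (by nlinarith : (0:ℝ) ≤ T - (t^2+1)*x^2)]; ring⟩
  have hp : (0:ℝ) ≤ (z^2*(x^2*t^2 - y^2))^2 +
      (2 * y ^ 6 * z ^ 2 +
      2 * y ^ 8 +
      2 * x ^ 2 * z ^ 6 +
      9 * x ^ 2 * y ^ 2 * z ^ 4 +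
      18 * x ^ 2 * y ^ 4 * z ^ 2 +
      2 * x ^ 2 * y ^ 4 * z ^ 2 * t ^ 2 +
      16 * x ^ 2 * y ^ 6 +
      6 * x ^ 2 * y ^ 6 * t ^ 2 +
      14 * x ^ 4 * z ^ 4 +
      5 * x ^ 4 * z ^ 4 * t ^ 2 +
      44 * x ^ 4 * y ^ 2 * z ^ 2 +
      20 * x ^ 4 * y ^ 2 * z ^ 2 * t ^ 2 +
      2 * x ^ 4 * y ^ 2 * z ^ 2 * t ^ 4 +
      47 * x ^ 4 * y ^ 4 +
      36 * x ^ 4 * y ^ 4 * t ^ 2 +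
      7 * x ^ 4 * y ^ 4 * t ^ 4 +
      34 * x ^ 6 * z ^ 2 +
      32 * x ^ 6 * z ^ 2 * t ^ 2 +
      12 * x ^ 6 * z ^ 2 * t ^ 4 +
      2 * x ^ 6 * z ^ 2 * t ^ 6 +
      61 * x ^ 6 * y ^ 2 +
      72 * x ^ 6 * y ^ 2 * t ^ 2 +
      29 * x ^ 6 * y ^ 2 * t ^ 4 +
      4 * x ^ 6 * y ^ 2 * t ^ 6 +
      30 * x ^ 8 +
      49 * x ^ 8 * t ^ 2 +
      31 * x ^ 8 * t ^ 4 +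
      9 * x ^ 8 * t ^ 6 +
      1 * x ^ 8 * t ^ 8) := by positivity
  nlinarith [hp]


noncomputable def paretoCost {n : ℕ} (d : Fin n → ℝ) (k : ℕ) : ℝ :=
  ∑ i : Fin n,
    if (i : ℕ) < k then ∑ ℓ ∈ Finset.univ.filter (fun ℓ : Fin n => ℓ ≤ i), d ℓ
    else (∑ ℓ ∈ Finset.univ.filter (fun ℓ : Fin n => (ℓ : ℕ) < k), d ℓ) +
      (((∑ ℓ : Fin n, d ℓ) - ∑ ℓ ∈ Finset.univ.filter (fun ℓ : Fin n => (ℓ : ℕ) < k), d ℓ)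
        + d i) / 2

noncomputable def smithCost {n : ℕ} (d : Fin n → ℝ) : ℝ :=
  ∑ i : Fin n, ((n : ℝ) - ((i : ℕ) : ℝ)) * d i

set_option maxHeartbeats 4000000 in
/-- For sorted nonnegative sizes with `D > 0`, `1 ≤ k ≤ n-1` and
`ε = ε_k = (sum of the k smallest sizes)/D > 0`, the efficacy ratio of the `k`-th
Pareto schedule is at most `1/(4ε) + 1 + ε/4`:
`c(A^k) ≤ (1/(4ε) + 1 + ε/4) · c(A*)`. -/
theorem pareto_schedule_efficacy_upper (n : ℕ) (d : Fin n → ℝ)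
    (hnn : ∀ i, 0 ≤ d i) (hmono : Monotone d)
    (hD : 0 < ∑ ℓ : Fin n, d ℓ) (k : ℕ) (hk1 : 1 ≤ k) (hk : k ≤ n - 1)
    (ε : ℝ)
    (hε : ε = (∑ ℓ ∈ Finset.univ.filter (fun ℓ : Fin n => (ℓ : ℕ) < k), d ℓ) /
      (∑ ℓ : Fin n, d ℓ))
    (hεpos : 0 < ε) :
    paretoCost d k ≤ (1 / (4 * ε) + 1 + ε / 4) * smithCost d := by
  classical
  have hn0 : n ≠ 0 := by
    rintro rfl
    simp at hD
  have hkn : k < n := by omega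
  set e : ℕ → ℝ := fun i => if h : i < n then d ⟨i, h⟩ else 0 with he
  have hed : ∀ i : Fin n, d i = e (i : ℕ) := by
    intro i; simp [he, i.isLt]
  have he0 : ∀ i, 0 ≤ e i := by
    intro i
    by_cases h : i < n <;> simp [he, h] <;> exact hnn _
  have hemono : ∀ i j, i ≤ j → j < n → e i ≤ e j := by
    intro i j hij hj
    have hi : i < n := lt_of_le_of_lt hij hj
    simp only [he, dif_pos hi, dif_pos hj]
    exact hmono (show (⟨i, hi⟩ : Fin n) ≤ ⟨j, hj⟩ from hij)
  set S := ∑ i ∈ range k, e i with hSdef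
  set T := ∑ i ∈ Finset.Ico k n, e i with hTdef
  set Z := ∑ i ∈ range k, (∑ j ∈ range i, e j) with hZdef
  set C2 := ∑ i ∈ Finset.Ico k n, ((n:ℝ) - (i:ℝ)) * e i with hC2def
  set μ := ((n - k : ℕ) : ℝ) with hμdef
  set a := e (k-1) with hadef
  -- basic conversions
  have hrange : ∑ ℓ : Fin n, d ℓ = ∑ i ∈ range n, e i := by
    simp_rw [hed]
    exact Fin.sum_univ_eq_sum_range e n
  have hsplit : ∑ i ∈ range n, e i = S + T := by
    rw [hSdef, hTdef, Finset.range_eq_Ico,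
      ← Finset.sum_Ico_consecutive e (Nat.zero_le k) hkn.le, ← Finset.range_eq_Ico]
  have hfinsum : ∑ ℓ : Fin n, d ℓ = S + T := by rw [hrange, hsplit]
  have hfilter : (∑ ℓ ∈ Finset.univ.filter (fun ℓ : Fin n => (ℓ : ℕ) < k), d ℓ) = S := by
    rw [Finset.sum_filter]
    simp_rw [hed]
    rw [Fin.sum_univ_eq_sum_range (fun l => if l < k then e l else 0) n, ← Finset.sum_filter]
    rw [hSdef]
    apply Finset.sum_congr _ (fun _ _ => rfl)
    ext x
    simp only [Finset.mem_filter, Finset.mem_range]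
    omega
  have hμcast : μ = (n:ℝ) - (k:ℝ) := by
    rw [hμdef, Nat.cast_sub hkn.le]
  have hμ1 : 1 ≤ μ := by
    rw [hμdef]
    exact_mod_cast Nat.one_le_iff_ne_zero.mpr (by omega)
  have hpre : ∀ i : Fin n, (∑ ℓ ∈ Finset.univ.filter (fun ℓ : Fin n => ℓ ≤ i), d ℓ)
      = ∑ l ∈ range ((i:ℕ)+1), e l := by
    intro i
    rw [Finset.sum_filter]
    have h1 : ∀ ℓ : Fin n, (if ℓ ≤ i then d ℓ else 0)
        = (fun l => if l ≤ (i:ℕ) then e l else 0) (ℓ:ℕ) := by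
      intro ℓ
      simp only [Fin.le_def, hed ℓ]
    simp_rw [h1]
    rw [Fin.sum_univ_eq_sum_range (fun l => if l ≤ (i:ℕ) then e l else 0) n, ← Finset.sum_filter]
    apply Finset.sum_congr _ (fun _ _ => rfl)
    ext x
    simp only [Finset.mem_filter, Finset.mem_range]
    have := i.isLt
    omega
  have hZS : ∑ i ∈ range k, (∑ j ∈ range (i+1), e j) = Z + S := by
    rw [hZdef, hSdef, ← Finset.sum_add_distrib]
    exact Finset.sum_congr rfl (fun i _ => Finset.sum_range_succ e i)
  have hcard : ((Finset.Ico k n).card : ℝ) = μ := by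
    rw [Nat.card_Ico, hμdef]
  have hpar : paretoCost d k = Z + (μ+1)*S + (μ+1)*T/2 := by
    unfold paretoCost
    have hterm : ∀ i : Fin n,
        (if (i : ℕ) < k then ∑ ℓ ∈ Finset.univ.filter (fun ℓ : Fin n => ℓ ≤ i), d ℓ
        else (∑ ℓ ∈ Finset.univ.filter (fun ℓ : Fin n => (ℓ : ℕ) < k), d ℓ) +
          (((∑ ℓ : Fin n, d ℓ) - ∑ ℓ ∈ Finset.univ.filter (fun ℓ : Fin n => (ℓ : ℕ) < k), d ℓ)
            + d i) / 2)
        = (fun l => if l < k then ∑ j ∈ range (l+1), e j else S + (T + e l)/2) (i:ℕ) := by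
      intro i
      by_cases h : (i:ℕ) < k
      · simp only [if_pos h, hpre i]
      · simp only [if_neg h, hfilter, hfinsum, hed i]
        ring
    simp_rw [hterm]
    rw [Fin.sum_univ_eq_sum_range (fun l => if l < k then ∑ j ∈ range (l+1), e j
      else S + (T + e l)/2) n]
    rw [Finset.range_eq_Ico, ← Finset.sum_Ico_consecutive _ (Nat.zero_le k) hkn.le,
      ← Finset.range_eq_Ico]
    rw [Finset.sum_congr rfl (fun i hi => if_pos (Finset.mem_range.mp hi)),
      Finset.sum_congr rfl (fun i hi => if_neg (by simp [Finset.mem_Ico] at hi; omega)), hZS]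
    rw [Finset.sum_add_distrib, Finset.sum_const, nsmul_eq_mul, hcard]
    have : ∑ i ∈ Finset.Ico k n, (T + e i)/2 = (μ * T + T)/2 := by
      rw [← Finset.sum_div, Finset.sum_add_distrib, Finset.sum_const, nsmul_eq_mul, hcard,
        ← hTdef]
    rw [this]
    ring
  have hsm : smithCost d = Z + (μ+1)*S + C2 := by
    unfold smithCost
    have hterm : ∀ i : Fin n, ((n : ℝ) - ((i : ℕ) : ℝ)) * d i
        = (fun l : ℕ => ((n:ℝ) - (l:ℝ)) * e l) (i:ℕ) := by
      intro i
      rw [hed i]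
    simp_rw [hterm]
    rw [Fin.sum_univ_eq_sum_range (fun l : ℕ => ((n:ℝ) - (l:ℝ)) * e l) n]
    rw [Finset.range_eq_Ico, ← Finset.sum_Ico_consecutive _ (Nat.zero_le k) hkn.le,
      ← Finset.range_eq_Ico, ← hC2def]
    have hC1 : ∑ i ∈ range k, ((n:ℝ) - (i:ℝ)) * e i
        = ∑ i ∈ range k, (((k:ℝ) - (i:ℝ)) * e i + μ * e i) := by
      refine Finset.sum_congr rfl (fun i _ => ?_)
      rw [hμcast]
      ring
    rw [hC1, Finset.sum_add_distrib, ← Finset.mul_sum, ← hSdef, sum_prefix_swap e k, hZS]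
    ring
  have haS : a ≤ S := by
    refine Finset.single_le_sum (fun i _ => he0 i) ?_
    simp [Finset.mem_range]; omega
  have hSka : S ≤ (k:ℝ) * a := by
    have := Finset.sum_le_card_nsmul (range k) e a
      (fun i hi => hemono i (k-1) (by simp [Finset.mem_range] at hi; omega) (by omega))
    simpa [nsmul_eq_mul] using this
  have hTma : μ * a ≤ T := by
    have := Finset.card_nsmul_le_sum (Finset.Ico k n) e a
      (fun i hi => hemono (k-1) i (by simp [Finset.mem_Ico] at hi; omega)
        (by simp [Finset.mem_Ico] at hi; omega))
    simpa [nsmul_eq_mul, Nat.card_Ico, hμdef] using this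
  have hT0 : 0 ≤ T := Finset.sum_nonneg fun i _ => he0 i
  have hZ0 : 0 ≤ Z := Finset.sum_nonneg fun i _ => Finset.sum_nonneg fun j _ => he0 j
  have hea : ∀ i ∈ range k, e i ≤ a := by
    intro i hi
    rw [hadef]
    exact hemono i (k-1) (by simp only [Finset.mem_range] at hi; omega) (by omega)
  have hsq : S^2 ≤ a*S + 2*a*Z := by
    have hid := sum_sq_identity e k
    rw [← hSdef] at hid
    have h1 : ∑ i ∈ range k, (e i)^2 ≤ a * S := by
      rw [hSdef, Finset.mul_sum]
      exact Finset.sum_le_sum fun i hi => by nlinarith [he0 i, hea i hi]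
    have h2 : ∑ i ∈ range k, e i * (∑ j ∈ range i, e j) ≤ a * Z := by
      rw [hZdef, Finset.mul_sum]
      refine Finset.sum_le_sum fun i hi => ?_
      have hQ : 0 ≤ ∑ j ∈ range i, e j := Finset.sum_nonneg fun j _ => he0 j
      nlinarith [hea i hi]
    linarith only [hid, h1, h2]
  have hC2b : T + a*(μ*(μ-1)/2) ≤ C2 := by
    have hG : ∑ i ∈ Finset.Ico k n, ((n:ℝ) - 1 - (i:ℝ)) = μ*(μ-1)/2 := by
      rw [Finset.sum_Ico_eq_sum_range]
      rw [Finset.sum_congr rfl (fun j (hj : j ∈ range (n-k)) =>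
        show ((n:ℝ) - 1 - ((k+j:ℕ):ℝ)) = (μ - 1) - (j:ℝ) by
          rw [hμcast]; push_cast; ring)]
      rw [Finset.sum_sub_distrib, Finset.sum_const, nsmul_eq_mul, Finset.card_range,
        gauss_real (n-k) (by omega), ← hμdef]
      ring
    have h1 : ∑ i ∈ Finset.Ico k n, (e i + ((n:ℝ) - 1 - (i:ℝ))*a) ≤ C2 := by
      rw [hC2def]
      refine Finset.sum_le_sum fun i hi => ?_
      simp only [Finset.mem_Ico] at hi
      have hai : a ≤ e i := by
        rw [hadef]
        exact hemono (k-1) i (by omega) hi.2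
      have hin : ((i:ℝ)+1) ≤ (n:ℝ) := by exact_mod_cast hi.2
      have hc : (0:ℝ) ≤ (n:ℝ) - 1 - (i:ℝ) := by linarith only [hin]
      have hmul := mul_le_mul_of_nonneg_left hai hc
      linarith only [hmul]
    rw [Finset.sum_add_distrib, ← hTdef, ← Finset.sum_mul, hG] at h1
    linarith only [h1]
  have hεval : ε = S / (S + T) := by rw [hε, hfilter, hfinsum]
  have hDpos : 0 < S + T := by rw [← hfinsum]; exact hD
  have hSpos : 0 < S := by
    have : S = ε * (S + T) := by rw [hεval]; field_simp
    rw [this]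
    positivity
  clear_value S T Z C2 μ a
  clear hfinsum hfilter hε hSdef hTdef hZdef hC2def hμdef hadef hD hεpos
  have hapos : 0 < a := by nlinarith [Nat.cast_nonneg (α := ℝ) k]
  have hr : 1/(4*ε) + 1 + ε/4 = ((S+T)^2 + 4*S*(S+T) + S^2) / (4*S*(S+T)) := by
    rw [hεval]
    have h1 : S ≠ 0 := hSpos.ne'
    have h2 : S + T ≠ 0 := hDpos.ne'
    field_simp
  rw [hpar, hsm, hr, div_mul_eq_mul_div, le_div_iff₀ (by positivity)]
  have aux' := pareto_aux S T a μ hapos.le haS hTma hμ1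
  have h5 : 0 ≤ ((S+T)^2 + S^2) * (2*a*Z - (S^2 - a*S)) :=
    mul_nonneg (by positivity) (by linarith)
  have h6 : 0 ≤ (2*a) * (((S+T)^2 + 4*S*(S+T) + S^2) * (C2 - (T + a*(μ*(μ-1)/2)))) :=
    mul_nonneg (by linarith) (mul_nonneg (by positivity) (by linarith))
  have h2a : (0:ℝ) < 2*a := by linarith
  have h7 : 0 ≤ (2*a) * (((S+T)^2 + 4*S*(S+T) + S^2) * (Z + (μ+1)*S + C2)
      - (Z + (μ+1)*S + (μ+1)*T/2) * (4*S*(S+T))) := by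
    linarith [aux', h5, h6]
  have h8 := (mul_nonneg_iff_of_pos_left h2a).mp h7
  linarith [h8]
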